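/- Let X and Y be nonempty finite sets, let μ and ν be normalized capacities on X and Y respectively, and let f : X × Y → ℝ. Then for every π ∈ Π_Ch(μ,ν), the Choquet integral of f with respect to π is less than or equal to the Choquet integral of f with respect to π^*, where π^*(N) = min(μ(N_X), ν(N_Y)). In particular, the maximum of the Choquet integral of f over Π_Ch(μ,ν) is attained at π^*. -/

import Mathlib

/-!
The marginal conditions and monotonicity give `π N ≤ π (N_X × Y) = μ N_X` and
`π N ≤ π (X × N_Y) = ν N_Y`, so every `π ∈ Π_Ch(μ, ν)` lies pointwise below `π^*`; and the
Choquet integral is monotone in the capacity, being an integral of the capacities of the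
superlevel sets of `f`.
-/

open Finset MeasureTheory

/-- A capacity on a finite set `Z`: a monotone set function vanishing on `∅`. -/
def IsCapacity {Z : Type*} (γ : Finset Z → ℝ) : Prop :=
  γ ∅ = 0 ∧ ∀ A B : Finset Z, A ⊆ B → γ A ≤ γ B

/-- A normalized capacity: a capacity with `γ(Z) = 1`. -/
def IsNormalizedCapacity {Z : Type*} [Fintype Z] (γ : Finset Z → ℝ) : Prop :=
  IsCapacity γ ∧ γ Finset.univ = 1

/-- Membership of a capacity `π` on `X × Y` in `Π_Ch(μ, ν)`:
`π` is a capacity whose marginals are `μ` and `ν`. -/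
def InPiCh {X Y : Type*} [Fintype X] [Fintype Y]
    (μ : Finset X → ℝ) (ν : Finset Y → ℝ) (π : Finset (X × Y) → ℝ) : Prop :=
  IsCapacity π ∧ (∀ A : Finset X, π (A ×ˢ Finset.univ) = μ A) ∧
    (∀ B : Finset Y, π (Finset.univ ×ˢ B) = ν B)

/-- Projection of `N ⊆ X × Y` onto `X`. -/
def projX {X Y : Type*} [DecidableEq X] (N : Finset (X × Y)) : Finset X :=
  N.image Prod.fst

/-- Projection of `N ⊆ X × Y` onto `Y`. -/
def projY {X Y : Type*} [DecidableEq Y] (N : Finset (X × Y)) : Finset Y :=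
  N.image Prod.snd

/-- Full-fiber projection of `N ⊆ X × Y` onto `X`: points `x` with `(x, y) ∈ N` for all `y`. -/
def tprojX {X Y : Type*} [Fintype X] [Fintype Y] [DecidableEq X] [DecidableEq Y]
    (N : Finset (X × Y)) : Finset X :=
  Finset.univ.filter (fun x => ∀ y : Y, (x, y) ∈ N)

/-- Full-fiber projection of `N ⊆ X × Y` onto `Y`: points `y` with `(x, y) ∈ N` for all `x`. -/
def tprojY {X Y : Type*} [Fintype X] [Fintype Y] [DecidableEq X] [DecidableEq Y]
    (N : Finset (X × Y)) : Finset Y :=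
  Finset.univ.filter (fun y => ∀ x : X, (x, y) ∈ N)

/-- The Choquet integral of `f` with respect to a (normalized) capacity `γ` on a finite set. -/
noncomputable def choquet {Z : Type*} [Fintype Z] (γ : Finset Z → ℝ) (f : Z → ℝ) : ℝ :=
  (∫ t in Set.Ioi (0 : ℝ), γ (Finset.univ.filter (fun z => t ≤ f z))) +
    ∫ t in Set.Iio (0 : ℝ), (γ (Finset.univ.filter (fun z => t ≤ f z)) - 1)


section Choquet

variable {Z : Type*} [Fintype Z] {γ : Finset Z → ℝ}

lemma IsCapacity.antitone_superlevel (hγ : IsCapacity γ) (f : Z → ℝ) :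
    Antitone fun t => γ (univ.filter fun z => t ≤ f z) :=
  fun _ _ hst => hγ.2 _ _ fun _ hz => by
    simp only [mem_filter] at hz ⊢
    exact ⟨hz.1, hst.trans hz.2⟩

lemma Antitone.integrableOn_Ioi_of_eq_zero {g : ℝ → ℝ} (hg : Antitone g) {M : ℝ}
    (hM : ∀ t, M < t → g t = 0) (a : ℝ) : IntegrableOn g (Set.Ioi a) := by
  have hIcc : IntegrableOn g (Set.Icc a M) :=
    hg.locallyIntegrable.integrableOn_isCompact isCompact_Icc
  have hIoi : IntegrableOn g (Set.Ioi M) :=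
    integrableOn_zero.congr_fun (fun t ht => (hM t ht).symm) measurableSet_Ioi
  refine (hIcc.union hIoi).mono_set fun t ht => ?_
  rcases le_or_gt t M with h | h
  exacts [Or.inl ⟨le_of_lt ht, h⟩, Or.inr h]

lemma Antitone.integrableOn_Iio_of_eq_zero {g : ℝ → ℝ} (hg : Antitone g) {m : ℝ}
    (hm : ∀ t, t < m → g t = 0) (a : ℝ) : IntegrableOn g (Set.Iio a) := by
  have hIcc : IntegrableOn g (Set.Icc m a) :=
    hg.locallyIntegrable.integrableOn_isCompact isCompact_Icc
  have hIio : IntegrableOn g (Set.Iio m) :=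
    integrableOn_zero.congr_fun (fun t ht => (hm t ht).symm) measurableSet_Iio
  refine (hIio.union hIcc).mono_set fun t ht => ?_
  rcases lt_or_ge t m with h | h
  exacts [Or.inl h, Or.inr ⟨h, le_of_lt ht⟩]

lemma IsCapacity.integrableOn_Ioi (hγ : IsCapacity γ) (f : Z → ℝ) :
    IntegrableOn (fun t => γ (univ.filter fun z => t ≤ f z)) (Set.Ioi 0) := by
  obtain ⟨M, hM⟩ := Finite.exists_le f
  refine (hγ.antitone_superlevel f).integrableOn_Ioi_of_eq_zero (M := M) (fun t ht => ?_) 0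
  rw [filter_false_of_mem fun z _ => not_le.2 ((hM z).trans_lt ht), hγ.1]

lemma IsNormalizedCapacity.integrableOn_Iio (hγ : IsNormalizedCapacity γ) (f : Z → ℝ) :
    IntegrableOn (fun t => γ (univ.filter fun z => t ≤ f z) - 1) (Set.Iio 0) := by
  obtain ⟨m, hm⟩ := Finite.exists_ge f
  refine Antitone.integrableOn_Iio_of_eq_zero (m := m)
    (fun s t hst => sub_le_sub_right (hγ.1.antitone_superlevel f hst) 1) (fun t ht => ?_) 0
  dsimp only
  rw [filter_true_of_mem fun z _ => ht.le.trans (hm z), hγ.2, sub_self]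

lemma choquet_mono {γ₁ γ₂ : Finset Z → ℝ} (h₁ : IsNormalizedCapacity γ₁)
    (h₂ : IsNormalizedCapacity γ₂) (hle : ∀ N, γ₁ N ≤ γ₂ N) (f : Z → ℝ) :
    choquet γ₁ f ≤ choquet γ₂ f :=
  add_le_add
    (setIntegral_mono_on (h₁.1.integrableOn_Ioi f) (h₂.1.integrableOn_Ioi f) measurableSet_Ioi
      fun _ _ => hle _)
    (setIntegral_mono_on (h₁.integrableOn_Iio f) (h₂.integrableOn_Iio f) measurableSet_Iio
      fun _ _ => sub_le_sub_right (hle _) 1)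

end Choquet

section Coupling

variable {X Y : Type*} {μ : Finset X → ℝ} {ν : Finset Y → ℝ}

lemma InPiCh.isNormalizedCapacity [Fintype X] [Fintype Y] {π : Finset (X × Y) → ℝ}
    (hπ : InPiCh μ ν π) (hμ : μ univ = 1) : IsNormalizedCapacity π :=
  ⟨hπ.1, by rw [← univ_product_univ, hπ.2.1, hμ]⟩

variable [DecidableEq X] [DecidableEq Y]

def piUpper (μ : Finset X → ℝ) (ν : Finset Y → ℝ) (N : Finset (X × Y)) : ℝ :=
  min (μ (projX N)) (ν (projY N))

lemma isCapacity_piUpper (hμ : IsCapacity μ) (hν : IsCapacity ν) : IsCapacity (piUpper μ ν) :=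
  ⟨by simp [piUpper, projX, projY, hμ.1, hν.1], fun _ _ hAB =>
    min_le_min (hμ.2 _ _ (image_subset_image hAB)) (hν.2 _ _ (image_subset_image hAB))⟩

variable [Fintype X] [Fintype Y]

lemma piUpper_product_univ [Nonempty Y] (hμ : IsNormalizedCapacity μ)
    (hν : IsNormalizedCapacity ν) (A : Finset X) : piUpper μ ν (A ×ˢ univ) = μ A := by
  rcases A.eq_empty_or_nonempty with rfl | hA
  · simp [piUpper, projX, projY, hμ.1.1, hν.1.1]
  · rw [piUpper, projX, projY, product_image_fst univ_nonempty, product_image_snd hA, hν.2]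
    exact min_eq_left (hμ.2 ▸ hμ.1.2 _ _ (subset_univ A))

lemma piUpper_univ_product [Nonempty X] (hμ : IsNormalizedCapacity μ)
    (hν : IsNormalizedCapacity ν) (B : Finset Y) : piUpper μ ν (univ ×ˢ B) = ν B := by
  rcases B.eq_empty_or_nonempty with rfl | hB
  · simp [piUpper, projX, projY, hμ.1.1, hν.1.1]
  · rw [piUpper, projX, projY, product_image_fst hB, product_image_snd univ_nonempty, hμ.2]
    exact min_eq_right (hν.2 ▸ hν.1.2 _ _ (subset_univ B))

lemma inPiCh_piUpper [Nonempty X] [Nonempty Y] (hμ : IsNormalizedCapacity μ)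
    (hν : IsNormalizedCapacity ν) : InPiCh μ ν (piUpper μ ν) :=
  ⟨isCapacity_piUpper hμ.1 hν.1, piUpper_product_univ hμ hν, piUpper_univ_product hμ hν⟩

lemma InPiCh.le_piUpper {π : Finset (X × Y) → ℝ} (hπ : InPiCh μ ν π) (N : Finset (X × Y)) :
    π N ≤ piUpper μ ν N := by
  obtain ⟨⟨-, hmono⟩, hX, hY⟩ := hπ
  refine le_min ?_ ?_
  · rw [← hX]
    exact hmono _ _ fun p hp => mem_product.2 ⟨mem_image_of_mem _ hp, mem_univ _⟩
  · rw [← hY]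
    exact hmono _ _ fun p hp => mem_product.2 ⟨mem_univ _, mem_image_of_mem _ hp⟩

end Coupling

/-- the Choquet integral of `f` with respect to `π^*` is an upper bound for the
Choquet integral of `f` with respect to any `π ∈ Π_Ch(μ, ν)`; since `π^* ∈ Π_Ch(μ, ν)`,
the maximum of the Choquet integral over `Π_Ch(μ, ν)` is attained at `π^*`. -/
theorem choquet_max_at_piUpper {X Y : Type*} [Fintype X] [Fintype Y] [Nonempty X] [Nonempty Y]
    [DecidableEq X] [DecidableEq Y]
    (μ : Finset X → ℝ) (ν : Finset Y → ℝ)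
    (hμ : IsNormalizedCapacity μ) (hν : IsNormalizedCapacity ν) (f : X × Y → ℝ) :
    InPiCh μ ν (fun N : Finset (X × Y) => min (μ (projX N)) (ν (projY N))) ∧
      ∀ π : Finset (X × Y) → ℝ, InPiCh μ ν π →
        choquet π f ≤
          choquet (fun N : Finset (X × Y) => min (μ (projX N)) (ν (projY N))) f := by
  have hstar : InPiCh μ ν (piUpper μ ν) := inPiCh_piUpper hμ hν
  refine ⟨hstar, fun π hπ => ?_⟩
  exact choquet_mono (hπ.isNormalizedCapacity hμ.2) (hstar.isNormalizedCapacity hμ.2)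
    hπ.le_piUpper f
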